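/- Let γ ∈ {1, −1}. For each integer n define the vector field on ℝ² (coordinates (t,x)): L_n = e^{-nt} ∂_t + e^{-nt} [ n − sgn(n) (γ/2) (Σ_{j=1}^{|n|−1} j(j+1)) e^{-2x} ] ∂_x, where the sum is empty (equal to 0) when |n| ≤ 1; equivalently the ∂_x-coefficient is e^{-nt}[ n − γ (n³ − n)/6 · e^{-2x} ]. Then for all integers m, n one has [L_m, L_n] = (m − n) L_{m+n}. (Realization 𝔚₈ of the Witt algebra from Theorem 1.) -/
import Mathlib


noncomputable section

/-- Partial derivative of `f : ℝ² → ℝ` (curried) in the first variable `t`. -/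
def qt (f : ℝ → ℝ → ℝ) (t x : ℝ) : ℝ := deriv (fun s => f s x) t

/-- Partial derivative in the second variable `x`. -/
def qx (f : ℝ → ℝ → ℝ) (t x : ℝ) : ℝ := deriv (fun s => f t s) x

/-- A vector field `τ ∂_t + ξ ∂_x` on ℝ² with coordinates `(t,x)`. -/
structure VF2 where
  tau : ℝ → ℝ → ℝ
  xi  : ℝ → ℝ → ℝ

/-- Action of a vector field on a function: `X(F) = τ F_t + ξ F_x`. -/
def VF2.app (X : VF2) (F : ℝ → ℝ → ℝ) (t x : ℝ) : ℝ :=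
  X.tau t x * qt F t x + X.xi t x * qx F t x

/-- Lie bracket of vector fields on ℝ². -/
def VF2.bracket (X Y : VF2) : VF2 where
  tau := fun t x => X.app Y.tau t x - Y.app X.tau t x
  xi  := fun t x => X.app Y.xi t x - Y.app X.xi t x

/-- Scalar multiple of a vector field. -/
def VF2.smul (c : ℝ) (X : VF2) : VF2 where
  tau := fun t x => c * X.tau t x
  xi  := fun t x => c * X.xi t x

/-- The vector fields of the realization 𝔚₈:
`L n = e^{-nt} ∂_t + e^{-nt}[n - sgn(n)(γ/2)(Σ_{j=1}^{|n|-1} j(j+1)) e^{-2x}] ∂_x`;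
the `∂_x`-coefficient equals, in closed form, `e^{-nt}[n - γ(n³ - n)/6 · e^{-2x}]`. -/
def W8 (γ : ℝ) (n : ℤ) : VF2 where
  tau := fun t _ => Real.exp (-(n : ℝ) * t)
  xi  := fun t x => Real.exp (-(n : ℝ) * t) *
    ((n : ℝ) - γ * ((n : ℝ) ^ 3 - (n : ℝ)) / 6 * Real.exp (-2 * x))


lemma deriv_exp_mul (a t : ℝ) :
    deriv (fun s => Real.exp (a * s)) t = a * Real.exp (a * t) := by
  have h := (((hasDerivAt_id t).const_mul a).exp)
  simpa [mul_comm] using h.deriv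

lemma deriv_exp_mul_const (a c t : ℝ) :
    deriv (fun s => Real.exp (a * s) * c) t = a * Real.exp (a * t) * c := by
  have h := ((((hasDerivAt_id t).const_mul a).exp).mul_const c)
  simpa [mul_comm, mul_assoc, mul_left_comm] using h.deriv

lemma deriv_aux (b k c x : ℝ) :
    deriv (fun s => b * (c - k * Real.exp (-2 * s))) x
      = b * (2 * k * Real.exp (-2 * x)) := by
  have h1 : HasDerivAt (fun s : ℝ => Real.exp (-2 * s)) (-2 * Real.exp (-2 * x)) x := by
    have := (((hasDerivAt_id x).const_mul (-2 : ℝ)).exp)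
    simpa [mul_comm] using this
  have h : HasDerivAt (fun s => b * (c - k * Real.exp (-2 * s)))
      (b * (0 - k * (-2 * Real.exp (-2 * x)))) x :=
    (((hasDerivAt_const x c).sub ((h1.const_mul k))).const_mul b)
  have := h.deriv
  rw [this]; ring

/-- Realization 𝔚₈ of the Witt algebra: `[L m, L n] = (m - n) L (m + n)`. -/
theorem witt_realization_W8 (γ : ℝ) (hγ : γ = 1 ∨ γ = -1) (m n : ℤ) :
    VF2.bracket (W8 γ m) (W8 γ n) = VF2.smul ((m : ℝ) - (n : ℝ)) (W8 γ (m + n)) := by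
  have hq1 : ∀ (a : ℤ) (t x : ℝ), qt (fun t _ => Real.exp (-(a : ℝ) * t)) t x
      = -(a : ℝ) * Real.exp (-(a : ℝ) * t) := by
    intro a t x; simp only [qt]; rw [deriv_exp_mul]
  have hq2 : ∀ (a : ℤ) (t x : ℝ), qx (fun t _ => Real.exp (-(a : ℝ) * t)) t x = 0 := by
    intro a t x; simp [qx]
  have hq3 : ∀ (a : ℤ) (t x : ℝ),
      qt (fun t x => Real.exp (-(a : ℝ) * t) *
        ((a : ℝ) - γ * ((a : ℝ) ^ 3 - (a : ℝ)) / 6 * Real.exp (-2 * x))) t x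
      = -(a : ℝ) * Real.exp (-(a : ℝ) * t) *
        ((a : ℝ) - γ * ((a : ℝ) ^ 3 - (a : ℝ)) / 6 * Real.exp (-2 * x)) := by
    intro a t x; simp only [qt]; rw [deriv_exp_mul_const]
  have hq4 : ∀ (a : ℤ) (t x : ℝ),
      qx (fun t x => Real.exp (-(a : ℝ) * t) *
        ((a : ℝ) - γ * ((a : ℝ) ^ 3 - (a : ℝ)) / 6 * Real.exp (-2 * x))) t x
      = Real.exp (-(a : ℝ) * t) *
        (2 * (γ * ((a : ℝ) ^ 3 - (a : ℝ)) / 6) * Real.exp (-2 * x)) := by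
    intro a t x; simp only [qx]; rw [deriv_aux]
  show VF2.mk _ _ = VF2.mk _ _
  congr 1 <;> funext t x <;>
    simp only [VF2.app, W8, hq1, hq2, hq3, hq4, VF2.smul] <;>
  · rw [show ((m + n : ℤ) : ℝ) = (m : ℝ) + (n : ℝ) by push_cast; ring]
    rw [show -((m:ℝ)+(n:ℝ)) * t = (-(m:ℝ)*t) + (-(n:ℝ)*t) by ring, Real.exp_add]
    ring
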